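/- Let x, y be real numbers with y > x ≥ 0. Then the truncated tropical semiring 𝕋_{[x,y]} is isomorphic as a semiring to: 𝕋_{[0,1]} if x = 0; 𝕋_{[1,2]} if x > 0 and y ≤ 2x; 𝕋_{[1,2.5]} if x > 0 and 2x < y < 3x; and 𝕋_{[1,y/x]} if x > 0 and y ≥ 3x. Moreover the semirings 𝕋_{[0,1]}, 𝕋_{[1,2]}, 𝕋_{[1,2.5]} and 𝕋_{[1,y]} for real y ≥ 3 are pairwise non-isomorphic; in particular for 3 ≤ y < z, 𝕋_{[1,y]} and 𝕋_{[1,z]} are not isomorphic. -/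

import Mathlib

set_option maxHeartbeats 1000000

universe u

/-! ### Semiring classes.

A *semiring* here is a nonempty set with an associative commutative addition and an
associative multiplication which distributes over addition on both sides; no zero or
identity element is assumed. -/

class PlainSemiring (S : Type u) extends Add S, Mul S where
  nonempty' : Nonempty S
  add_assoc' : ∀ a b c : S, a + b + c = a + (b + c)
  add_comm' : ∀ a b : S, a + b = b + a
  mul_assoc' : ∀ a b c : S, a * b * c = a * (b * c)
  left_distrib' : ∀ a b c : S, a * (b + c) = a * b + a * c
  right_distrib' : ∀ a b c : S, (a + b) * c = a * c + b * c

/-- A bipotent semiring: `x + y` is always either `x` or `y`.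
(The induced total order is given by `x ≤ y ↔ x + y = y`.) -/
class BipotentSemiring (S : Type u) extends PlainSemiring S where
  bipotent : ∀ a b : S, a + b = a ∨ a + b = b

/-- A commutative bipotent semiring. -/
class CommBipotentSemiring (S : Type u) extends BipotentSemiring S where
  mul_comm' : ∀ a b : S, a * b = b * a

/-- `mpow a n` is the `(n+1)`-st power of `a`, so the set of positive powers of `a`
is exactly `Set.range (mpow a)`, and the multiplicative order of `a` is the
cardinality of `Set.range (mpow a)`. -/
def mpow {S : Type*} [Mul S] (a : S) : ℕ → S
  | 0 => a
  | n + 1 => mpow a n * a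

lemma mpow_mul_mpow {S : Type*} [PlainSemiring S] (a : S) (m n : ℕ) :
    mpow a m * mpow a n = mpow a (m + n + 1) := by
  induction n with
  | zero => rfl
  | succ n ih =>
    show mpow a m * (mpow a n * a) = mpow a (m + n + 1) * a
    rw [← PlainSemiring.mul_assoc', ih]

/-! ### Products of finite families, and permutability. -/

/-- Fold step used to define sums/products of possibly empty families in a structure
with no neutral element; the overall fold is `none` iff the family is empty. -/
def optStep {S : Type*} (op : S → S → S) : Option S → S → Option S :=
  fun acc x => some (acc.elim x (fun a => op a x))

/-- The sum `s 0 + s 1 + ⋯` of a finite family, as an `Option` (`none` iff `k = 0`). -/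
def finSum {S : Type*} [Add S] {k : ℕ} (s : Fin k → S) : Option S :=
  (List.ofFn s).foldl (optStep (· + ·)) none

/-- The product `s 0 * s 1 * ⋯` of a finite family, as an `Option` (`none` iff `k = 0`). -/
def finProd {S : Type*} [Mul S] {k : ℕ} (s : Fin k → S) : Option S :=
  (List.ofFn s).foldl (optStep (· * ·)) none

/-- A multiplicative structure is `k`-permutable if every product of `k` elements is
preserved by some non-identity permutation of its factors. -/
def KPermutable (S : Type*) [Mul S] (k : ℕ) : Prop :=
  ∀ s : Fin k → S, ∃ σ : Equiv.Perm (Fin k), σ ≠ Equiv.refl (Fin k) ∧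
    finProd (fun i => s (σ i)) = finProd s

/-- A semigroup is strongly permutable if it is `k`-permutable for some `k ≥ 2`. -/
def StronglyPermutable (S : Type*) [Mul S] : Prop :=
  ∃ k : ℕ, 2 ≤ k ∧ KPermutable S k

/-- A semigroup is weakly permutable if for some `k ≥ 2`, any product of `k` elements
is computed identically by two distinct permutations of its factors. -/
def WeaklyPermutable (S : Type*) [Mul S] : Prop :=
  ∃ k : ℕ, 2 ≤ k ∧ ∀ s : Fin k → S, ∃ σ τ : Equiv.Perm (Fin k), σ ≠ τ ∧
    finProd (fun i => s (σ i)) = finProd (fun i => s (τ i))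

/-- Isomorphism of semirings (bijection preserving addition and multiplication). -/
def RingLikeIso (S T : Type*) [Add S] [Mul S] [Add T] [Mul T] : Prop :=
  ∃ f : S → T, Function.Bijective f ∧ (∀ a b : S, f (a + b) = f a + f b) ∧
    (∀ a b : S, f (a * b) = f a * f b)

/-! ### Matrices. -/

/-- Square `n × n` matrices over `S`. -/
def MatSR (S : Type u) (n : ℕ) : Type u := Fin n → Fin n → S

/-- Matrix multiplication, `(A*B) i j = Σ_k (A i k * B k j)`.  (For `n ≥ 1` — the only
case of interest — the `getD` default value is never used.) -/
def matMul {S : Type*} [Add S] [Mul S] {n : ℕ} (A B : MatSR S n) : MatSR S n :=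
  fun i j => (finSum (fun k : Fin n => A i k * B k j)).getD (A i j * B i j)

/-- The multiplicative semigroup `M_n(S)`. -/
instance {S : Type*} [Add S] [Mul S] {n : ℕ} : Mul (MatSR S n) := ⟨matMul⟩

/-! ### `S⁰`: adjoining a zero, and upper triangular matrices. -/

/-- `S` with a zero (additively neutral, multiplicatively absorbing) element adjoined. -/
inductive Adj0 (S : Type u) : Type u
  | zero : Adj0 S
  | elem : S → Adj0 S

namespace Adj0

def add' {S : Type*} [Add S] : Adj0 S → Adj0 S → Adj0 S
  | .zero, b => b
  | .elem a, .zero => .elem a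
  | .elem a, .elem b => .elem (a + b)

def mul' {S : Type*} [Mul S] : Adj0 S → Adj0 S → Adj0 S
  | .zero, _ => .zero
  | .elem _, .zero => .zero
  | .elem a, .elem b => .elem (a * b)

instance {S : Type*} [Add S] : Add (Adj0 S) := ⟨add'⟩
instance {S : Type*} [Mul S] : Mul (Adj0 S) := ⟨mul'⟩

@[simp] lemma zero_add {S : Type*} [Add S] (b : Adj0 S) : (zero : Adj0 S) + b = b := rfl
@[simp] lemma add_zero {S : Type*} [Add S] (a : Adj0 S) : a + (zero : Adj0 S) = a := by
  cases a <;> rfl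
@[simp] lemma elem_add_elem {S : Type*} [Add S] (a b : S) :
    (elem a : Adj0 S) + elem b = elem (a + b) := rfl
@[simp] lemma zero_mul {S : Type*} [Mul S] (b : Adj0 S) : (zero : Adj0 S) * b = zero := rfl
@[simp] lemma mul_zero {S : Type*} [Mul S] (a : Adj0 S) : a * (zero : Adj0 S) = zero := by
  cases a <;> rfl
@[simp] lemma elem_mul_elem {S : Type*} [Mul S] (a b : S) :
    (elem a : Adj0 S) * elem b = elem (a * b) := rfl

lemma add_eq_zero_iff {S : Type*} [Add S] (a b : Adj0 S) :
    a + b = zero ↔ a = zero ∧ b = zero := by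
  cases a <;> cases b <;> simp

end Adj0

lemma foldl_optStep_adj0 {S : Type*} [Add S] (l : List (Adj0 S)) (a : Adj0 S) :
    ∃ c : Adj0 S, l.foldl (optStep (· + ·)) (some a) = some c ∧
      (c = Adj0.zero ↔ a = Adj0.zero ∧ ∀ x ∈ l, x = Adj0.zero) := by
  induction l generalizing a with
  | nil => exact ⟨a, rfl, by simp⟩
  | cons x l ih =>
    obtain ⟨c, hc, hiff⟩ := ih (a + x)
    refine ⟨c, ?_, ?_⟩
    · simpa [optStep] using hc
    · rw [hiff, Adj0.add_eq_zero_iff]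
      simp only [List.mem_cons, forall_eq_or_imp]
      tauto

lemma finSum_adj0_eq_zero {S : Type*} [Add S] {n : ℕ} (f : Fin n → Adj0 S) (i : Fin n)
    (d : Adj0 S) (h : ∀ k, f k = Adj0.zero) : (finSum f).getD d = Adj0.zero := by
  cases n with
  | zero => exact i.elim0
  | succ m =>
    rw [finSum, List.ofFn_succ, List.foldl_cons]
    obtain ⟨c, hc, hiff⟩ := foldl_optStep_adj0 (List.ofFn fun i : Fin m => f i.succ) (f 0)
    rw [show optStep (· + ·) none (f 0) = some (f 0) from rfl, hc]
    have : c = Adj0.zero := hiff.mpr ⟨h 0, by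
      intro x hx
      rw [List.mem_ofFn] at hx
      obtain ⟨j, rfl⟩ := hx
      exact h _⟩
    simp [this]

lemma finSum_adj0_ne_zero {S : Type*} [Add S] {n : ℕ} (f : Fin n → Adj0 S) (i : Fin n)
    (d : Adj0 S) (h : f i ≠ Adj0.zero) : (finSum f).getD d ≠ Adj0.zero := by
  cases n with
  | zero => exact i.elim0
  | succ m =>
    rw [finSum, List.ofFn_succ, List.foldl_cons]
    obtain ⟨c, hc, hiff⟩ := foldl_optStep_adj0 (List.ofFn fun i : Fin m => f i.succ) (f 0)
    rw [show optStep (· + ·) none (f 0) = some (f 0) from rfl, hc]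
    simp only [Option.getD_some]
    intro hcz
    obtain ⟨h0, hall⟩ := hiff.mp hcz
    induction i using Fin.cases with
    | zero => exact h h0
    | succ j => exact h (hall _ (List.mem_ofFn.mpr ⟨j, rfl⟩))

/-- Upper-triangularity over `S⁰`: entries strictly below the diagonal are the
adjoined zero; entries on and above the diagonal lie in `S`. -/
def IsUT {S : Type*} {n : ℕ} (A : MatSR (Adj0 S) n) : Prop :=
  (∀ i j : Fin n, (j : ℕ) < (i : ℕ) → A i j = Adj0.zero) ∧
  (∀ i j : Fin n, (i : ℕ) ≤ (j : ℕ) → ∃ s : S, A i j = Adj0.elem s)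

lemma IsUT.mul {S : Type*} [Add S] [Mul S] {n : ℕ} {A B : MatSR (Adj0 S) n}
    (hA : IsUT A) (hB : IsUT B) : IsUT (matMul A B) := by
  constructor
  · intro i j hji
    apply finSum_adj0_eq_zero _ i
    intro k
    rcases le_or_gt (i : ℕ) (k : ℕ) with h | h
    · rw [hB.1 k j (lt_of_lt_of_le hji h), Adj0.mul_zero]
    · rw [hA.1 i k h, Adj0.zero_mul]
  · intro i j hij
    have hne : matMul A B i j ≠ Adj0.zero := by
      apply finSum_adj0_ne_zero _ i
      obtain ⟨s, hs⟩ := hA.2 i i le_rfl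
      obtain ⟨t, ht⟩ := hB.2 i j hij
      rw [hs, ht, Adj0.elem_mul_elem]
      simp
    cases hc : matMul A B i j with
    | zero => exact absurd hc hne
    | elem s => exact ⟨s, rfl⟩

/-- The multiplicative semigroup `UT_n(S)` of upper triangular matrices over `S⁰`. -/
def UTMat (S : Type u) (n : ℕ) : Type u := {A : MatSR (Adj0 S) n // IsUT A}

instance {S : Type*} [Add S] [Mul S] {n : ℕ} : Mul (UTMat S n) :=
  ⟨fun A B => ⟨matMul A.1 B.1, A.2.mul B.2⟩⟩

/-! ### `S^{01}`: adjoining a zero and an identity, and unitriangular matrices. -/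

/-- `S` with a zero and a multiplicative identity adjoined (`S^{01}` in the paper).
The sum of `one` and an `elem` is left undefined in the paper; it is given an
arbitrary value here, and never arises in products of unitriangular matrices. -/
inductive Adj01 (S : Type u) : Type u
  | zero : Adj01 S
  | one : Adj01 S
  | elem : S → Adj01 S

namespace Adj01

def add' {S : Type*} [Add S] : Adj01 S → Adj01 S → Adj01 S
  | .zero, b => b
  | a, .zero => a
  | .one, .one => .one
  | .one, .elem b => .elem b
  | .elem a, .one => .elem a
  | .elem a, .elem b => .elem (a + b)

def mul' {S : Type*} [Mul S] : Adj01 S → Adj01 S → Adj01 S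
  | .zero, _ => .zero
  | _, .zero => .zero
  | .one, b => b
  | a, .one => a
  | .elem a, .elem b => .elem (a * b)

instance {S : Type*} [Add S] : Add (Adj01 S) := ⟨add'⟩
instance {S : Type*} [Mul S] : Mul (Adj01 S) := ⟨mul'⟩

@[simp] lemma zero_add {S : Type*} [Add S] (b : Adj01 S) : (zero : Adj01 S) + b = b := by
  cases b <;> rfl
@[simp] lemma add_zero {S : Type*} [Add S] (a : Adj01 S) : a + (zero : Adj01 S) = a := by
  cases a <;> rfl
@[simp] lemma one_add_one {S : Type*} [Add S] : (one : Adj01 S) + one = one := rfl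
@[simp] lemma elem_add_elem {S : Type*} [Add S] (a b : S) :
    (elem a : Adj01 S) + elem b = elem (a + b) := rfl
@[simp] lemma one_add_elem {S : Type*} [Add S] (b : S) :
    (one : Adj01 S) + elem b = elem b := rfl
@[simp] lemma elem_add_one {S : Type*} [Add S] (a : S) :
    (elem a : Adj01 S) + one = elem a := rfl
@[simp] lemma zero_mul {S : Type*} [Mul S] (b : Adj01 S) : (zero : Adj01 S) * b = zero := by
  cases b <;> rfl
@[simp] lemma mul_zero {S : Type*} [Mul S] (a : Adj01 S) : a * (zero : Adj01 S) = zero := by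
  cases a <;> rfl
@[simp] lemma one_mul {S : Type*} [Mul S] (b : Adj01 S) : (one : Adj01 S) * b = b := by
  cases b <;> rfl
@[simp] lemma mul_one {S : Type*} [Mul S] (a : Adj01 S) : a * (one : Adj01 S) = a := by
  cases a <;> rfl
@[simp] lemma elem_mul_elem {S : Type*} [Mul S] (a b : S) :
    (elem a : Adj01 S) * elem b = elem (a * b) := rfl

lemma mul_ne_one {S : Type*} [Mul S] {a b : Adj01 S} (ha : a ≠ one) (hb : b ≠ one) :
    a * b ≠ one := by
  cases a <;> cases b <;> simp_all

lemma add_ne_one {S : Type*} [Add S] {a b : Adj01 S} (ha : a ≠ one) (hb : b ≠ one) :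
    a + b ≠ one := by
  cases a <;> cases b <;> simp_all

lemma add_01 {S : Type*} [Add S] {a b : Adj01 S} (ha : a = zero ∨ a = one)
    (hb : b = zero ∨ b = one) :
    (a + b = zero ∨ a + b = one) ∧ (a + b = one ↔ a = one ∨ b = one) := by
  rcases ha with rfl | rfl <;> rcases hb with rfl | rfl <;> simp

end Adj01

lemma foldl_optStep_adj01 {S : Type*} [Add S] (l : List (Adj01 S)) (a : Adj01 S)
    (ha : a = Adj01.zero ∨ a = Adj01.one) (hl : ∀ x ∈ l, x = Adj01.zero ∨ x = Adj01.one) :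
    ∃ c : Adj01 S, l.foldl (optStep (· + ·)) (some a) = some c ∧
      (c = Adj01.zero ∨ c = Adj01.one) ∧
      (c = Adj01.one ↔ a = Adj01.one ∨ ∃ x ∈ l, x = Adj01.one) := by
  induction l generalizing a with
  | nil => exact ⟨a, rfl, ha, by simp⟩
  | cons x l ih =>
    have hx := hl x (by simp)
    have key := Adj01.add_01 ha hx
    obtain ⟨c, hc, hc01, hiff⟩ := ih (a + x) key.1 (fun y hy => hl y (by simp [hy]))
    refine ⟨c, by simpa [optStep] using hc, hc01, ?_⟩
    rw [hiff, key.2]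
    simp only [List.mem_cons, exists_eq_or_imp]
    tauto

lemma foldl_optStep_adj01_ne_one {S : Type*} [Add S] (l : List (Adj01 S)) (a : Adj01 S)
    (ha : a ≠ Adj01.one) (hl : ∀ x ∈ l, x ≠ Adj01.one) :
    ∃ c : Adj01 S, l.foldl (optStep (· + ·)) (some a) = some c ∧ c ≠ Adj01.one := by
  induction l generalizing a with
  | nil => exact ⟨a, rfl, ha⟩
  | cons x l ih =>
    have hax : a + x ≠ Adj01.one := Adj01.add_ne_one ha (hl x (by simp))
    obtain ⟨c, hc, hcne⟩ := ih (a + x) hax (fun y hy => hl y (by simp [hy]))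
    exact ⟨c, by simpa [optStep] using hc, hcne⟩

lemma finSum_adj01_eq_one {S : Type*} [Add S] {n : ℕ} (f : Fin n → Adj01 S) (i : Fin n)
    (d : Adj01 S) (h01 : ∀ k, f k = Adj01.zero ∨ f k = Adj01.one) (hi : f i = Adj01.one) :
    (finSum f).getD d = Adj01.one := by
  cases n with
  | zero => exact i.elim0
  | succ m =>
    rw [finSum, List.ofFn_succ, List.foldl_cons]
    obtain ⟨c, hc, _, hiff⟩ := foldl_optStep_adj01 (List.ofFn fun i : Fin m => f i.succ) (f 0)
      (h01 0) (by
        intro x hx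
        rw [List.mem_ofFn] at hx
        obtain ⟨j, rfl⟩ := hx
        exact h01 _)
    rw [show optStep (· + ·) none (f 0) = some (f 0) from rfl, hc]
    simp only [Option.getD_some]
    apply hiff.mpr
    induction i using Fin.cases with
    | zero => exact Or.inl hi
    | succ j => exact Or.inr ⟨f j.succ, List.mem_ofFn.mpr ⟨j, rfl⟩, hi⟩

lemma finSum_adj01_eq_zero {S : Type*} [Add S] {n : ℕ} (f : Fin n → Adj01 S) (i : Fin n)
    (d : Adj01 S) (h : ∀ k, f k = Adj01.zero) : (finSum f).getD d = Adj01.zero := by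
  cases n with
  | zero => exact i.elim0
  | succ m =>
    rw [finSum, List.ofFn_succ, List.foldl_cons]
    obtain ⟨c, hc, hc01, hiff⟩ := foldl_optStep_adj01 (List.ofFn fun i : Fin m => f i.succ)
      (f 0) (Or.inl (h 0)) (by
        intro x hx
        rw [List.mem_ofFn] at hx
        obtain ⟨j, rfl⟩ := hx
        exact Or.inl (h _))
    rw [show optStep (· + ·) none (f 0) = some (f 0) from rfl, hc]
    simp only [Option.getD_some]
    rcases hc01 with h' | h'
    · exact h'
    · exfalso
      rcases hiff.mp h' with h'' | ⟨x, hx, hx1⟩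
      · rw [h 0] at h''; cases h''
      · rw [List.mem_ofFn] at hx
        obtain ⟨j, rfl⟩ := hx
        rw [h _] at hx1; cases hx1

lemma finSum_adj01_ne_one {S : Type*} [Add S] {n : ℕ} (f : Fin n → Adj01 S) (i : Fin n)
    (d : Adj01 S) (h : ∀ k, f k ≠ Adj01.one) : (finSum f).getD d ≠ Adj01.one := by
  cases n with
  | zero => exact i.elim0
  | succ m =>
    rw [finSum, List.ofFn_succ, List.foldl_cons]
    obtain ⟨c, hc, hcne⟩ := foldl_optStep_adj01_ne_one (List.ofFn fun i : Fin m => f i.succ)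
      (f 0) (h 0) (by
        intro x hx
        rw [List.mem_ofFn] at hx
        obtain ⟨j, rfl⟩ := hx
        exact h _)
    rw [show optStep (· + ·) none (f 0) = some (f 0) from rfl, hc]
    simpa using hcne

/-- Unitriangularity over `S^{01}`: the adjoined zero strictly below the diagonal, the
adjoined identity on the diagonal, and entries of `S⁰` (i.e. anything except the
adjoined identity) strictly above the diagonal. -/
def IsU {S : Type*} {n : ℕ} (A : MatSR (Adj01 S) n) : Prop :=
  (∀ i j : Fin n, (j : ℕ) < (i : ℕ) → A i j = Adj01.zero) ∧
  (∀ i : Fin n, A i i = Adj01.one) ∧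
  (∀ i j : Fin n, (i : ℕ) < (j : ℕ) → A i j ≠ Adj01.one)

lemma IsU.mul {S : Type*} [Add S] [Mul S] {n : ℕ} {A B : MatSR (Adj01 S) n}
    (hA : IsU A) (hB : IsU B) : IsU (matMul A B) := by
  refine ⟨?_, ?_, ?_⟩
  · intro i j hji
    apply finSum_adj01_eq_zero _ i
    intro k
    rcases le_or_gt (i : ℕ) (k : ℕ) with h | h
    · rw [hB.1 k j (lt_of_lt_of_le hji h), Adj01.mul_zero]
    · rw [hA.1 i k h, Adj01.zero_mul]
  · intro i
    apply finSum_adj01_eq_one _ i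
    · intro k
      rcases lt_trichotomy (k : ℕ) (i : ℕ) with h | h | h
      · rw [hA.1 i k h, Adj01.zero_mul]; exact Or.inl rfl
      · have : k = i := Fin.ext h
        subst this
        rw [hA.2.1 k, hB.2.1 k, Adj01.one_mul]; exact Or.inr rfl
      · rw [hB.1 k i h, Adj01.mul_zero]; exact Or.inl rfl
    · rw [hA.2.1 i, hB.2.1 i, Adj01.one_mul]
  · intro i j hij
    apply finSum_adj01_ne_one _ i
    intro k
    rcases lt_trichotomy (k : ℕ) (i : ℕ) with h | h | h
    · rw [hA.1 i k h, Adj01.zero_mul]; exact fun h => by cases h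
    · have : k = i := Fin.ext h
      subst this
      rw [hA.2.1 k, Adj01.one_mul]
      exact hB.2.2 k j (by omega)
    · rcases lt_trichotomy (k : ℕ) (j : ℕ) with h' | h' | h'
      · exact Adj01.mul_ne_one (hA.2.2 i k h) (hB.2.2 k j h')
      · have : k = j := Fin.ext h'
        subst this
        rw [hB.2.1 k, Adj01.mul_one]
        exact hA.2.2 i k h
      · rw [hB.1 k j h', Adj01.mul_zero]; exact fun h => by cases h

/-- The multiplicative monoid `U_n(S)` of unitriangular matrices over `S^{01}`. -/
def UMat (S : Type u) (n : ℕ) : Type u := {A : MatSR (Adj01 S) n // IsU A}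

instance {S : Type*} [Add S] [Mul S] {n : ℕ} : Mul (UMat S n) :=
  ⟨fun A B => ⟨matMul A.1 B.1, A.2.mul B.2⟩⟩

/-! ### Monogenic subsemirings. -/

/-- The carrier of the monogenic subsemiring `⟨a⟩` generated by `a` is the set of
positive powers of `a`; in a bipotent semiring it is closed under addition. -/
instance genAdd {S : Type*} [BipotentSemiring S] (a : S) : Add ↥(Set.range (mpow a)) :=
  ⟨fun p q => ⟨p.1 + q.1, by
    rcases BipotentSemiring.bipotent p.1 q.1 with h | h <;> rw [h]
    exacts [p.2, q.2]⟩⟩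

instance genMul {S : Type*} [BipotentSemiring S] (a : S) : Mul ↥(Set.range (mpow a)) :=
  ⟨fun p q => ⟨p.1 * q.1, by
    obtain ⟨m, hm⟩ := p.2
    obtain ⟨n, hn⟩ := q.2
    exact ⟨m + n + 1, by rw [← hm, ← hn, mpow_mul_mpow]⟩⟩⟩

/-! ### Concrete bipotent semirings. -/

/-- The tropical semiring `ℕ_max` of positive natural numbers: addition is `max`,
multiplication is ordinary addition. -/
def NMax : Type := {n : ℕ // 0 < n}

instance : Add NMax := ⟨fun a b => ⟨max a.1 b.1, by have := a.2; have := b.2; omega⟩⟩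
instance : Mul NMax := ⟨fun a b => ⟨a.1 + b.1, by have := a.2; have := b.2; omega⟩⟩

/-- The tropical semiring `(-ℕ)_max` of negative integers: addition is `max`,
multiplication is ordinary addition. -/
def NegNMax : Type := {z : ℤ // z < 0}

instance : Add NegNMax := ⟨fun a b => ⟨max a.1 b.1, by have := a.2; have := b.2; omega⟩⟩
instance : Mul NegNMax := ⟨fun a b => ⟨a.1 + b.1, by have := a.2; have := b.2; omega⟩⟩

/-- The truncated tropical semiring `[k]_max` on `{1,…,k}`: addition is `max`,
multiplication is `a·b = min (a+b) k`. -/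
def KMax (k : ℕ) : Type := {n : ℕ // 0 < n ∧ n ≤ k}

instance {k : ℕ} : Add (KMax k) :=
  ⟨fun a b => ⟨max a.1 b.1, by have := a.2; have := b.2; omega⟩⟩
instance {k : ℕ} : Mul (KMax k) :=
  ⟨fun a b => ⟨min (a.1 + b.1) k, by have := a.2; have := b.2; omega⟩⟩

/-- The truncated tropical semiring `[-k]_max` on `{-k,…,-1}`: addition is `max`,
multiplication is `a·b = max (a+b) (-k)`. -/
def NegKMax (k : ℕ) : Type := {z : ℤ // -(k : ℤ) ≤ z ∧ z ≤ -1}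

instance {k : ℕ} : Add (NegKMax k) :=
  ⟨fun a b => ⟨max a.1 b.1, by have := a.2; have := b.2; omega⟩⟩
instance {k : ℕ} : Mul (NegKMax k) :=
  ⟨fun a b => ⟨max (a.1 + b.1) (-(k : ℤ)), by have := a.2; have := b.2; omega⟩⟩

/-- The two-element boolean semifield `𝔹`: `{0,1}` with `0 < 1`, addition `max` (= "or")
and the usual multiplication (= "and"). -/
def BoolSR : Type := Bool

instance : Add BoolSR := ⟨fun a b => (Bool.or a b : Bool)⟩
instance : Mul BoolSR := ⟨fun a b => (Bool.and a b : Bool)⟩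

/-- A chain semiring: a linearly ordered set with addition `max` and multiplication `min`. -/
def ChainSR (L : Type u) [LinearOrder L] : Type u := L

instance {L : Type u} [LinearOrder L] : Add (ChainSR L) := ⟨fun a b => (max a b : L)⟩
instance {L : Type u} [LinearOrder L] : Mul (ChainSR L) := ⟨fun a b => (min a b : L)⟩

/-- The three-element commutative bipotent semiring of Proposition 1: order `A < B < C`
(addition is `max`), every element multiplicatively idempotent, and all products of two
distinct elements equal to `B`. -/
inductive Three : Type
  | A : Three
  | B : Three
  | C : Three
deriving DecidableEq

instance : Fintype Three :=
  Fintype.ofList [Three.A, Three.B, Three.C] (by intro x; cases x <;> simp)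

def Three.add' : Three → Three → Three
  | .A, y => y
  | x, .A => x
  | .B, y => y
  | x, .B => x
  | .C, .C => .C

def Three.mul' : Three → Three → Three
  | .A, .A => .A
  | .B, .B => .B
  | .C, .C => .C
  | _, _ => .B

instance : Add Three := ⟨Three.add'⟩
instance : Mul Three := ⟨Three.mul'⟩

instance : CommBipotentSemiring Three where
  nonempty' := ⟨Three.A⟩
  add_assoc' := by decide
  add_comm' := by decide
  mul_assoc' := by decide
  left_distrib' := by decide
  right_distrib' := by decide
  bipotent := by decide
  mul_comm' := by decide

/-- A bundled (possibly zero-less and identity-less) semiring, used to quantify over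
semirings inside hypotheses. -/
structure BundledSemiring : Type 1 where
  carrier : Type
  add : carrier → carrier → carrier
  mul : carrier → carrier → carrier
  nonempty' : Nonempty carrier
  add_assoc' : ∀ a b c, add (add a b) c = add a (add b c)
  add_comm' : ∀ a b, add a b = add b a
  mul_assoc' : ∀ a b c, mul (mul a b) c = mul a (mul b c)
  left_distrib' : ∀ a b c, mul a (add b c) = add (mul a b) (mul a c)
  right_distrib' : ∀ a b c, mul (add a b) c = add (mul a c) (mul b c)

/-! ### Semifields. -/

/-- `z` is a zero element: additively neutral and multiplicatively absorbing. -/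
def IsZeroElem {S : Type*} [Add S] [Mul S] (z : S) : Prop :=
  ∀ x : S, z + x = x ∧ x + z = x ∧ z * x = z ∧ x * z = z

/-- `S` is a semifield: a commutative semiring, possibly without zero, whose set of
non-zero elements forms a group under multiplication (with identity `e`). -/
def IsSemifield (S : Type*) [Add S] [Mul S] : Prop :=
  ∃ e : S, ¬ IsZeroElem e ∧
    (∀ x : S, ¬ IsZeroElem x → e * x = x ∧ x * e = x) ∧
    (∀ x y : S, ¬ IsZeroElem x → ¬ IsZeroElem y → ¬ IsZeroElem (x * y)) ∧
    (∀ x : S, ¬ IsZeroElem x → ∃ y : S, ¬ IsZeroElem y ∧ x * y = e ∧ y * x = e)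

/-! ### Truncated tropical semirings. -/

/-- The underlying set `[x,y] ∪ {0}` of the truncated tropical semiring `𝕋_{[x,y]}`
(without the zero element `-∞`), for `0 ≤ x`.  Addition is `max`; multiplication is
`y`-truncated addition `a ⊗ b = min (a+b) y`, with the element `0` acting as the
multiplicative identity. -/
def TTb (x y : ℝ) (_hx : 0 ≤ x) : Type := {r : ℝ // r = 0 ∨ (x ≤ r ∧ r ≤ y)}

namespace TTb

protected def add {x y : ℝ} {hx : 0 ≤ x} (a b : TTb x y hx) : TTb x y hx :=
  ⟨max a.1 b.1, by rcases max_choice a.1 b.1 with h | h <;> rw [h]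
                   exacts [a.2, b.2]⟩

protected noncomputable def mul {x y : ℝ} {hx : 0 ≤ x} (a b : TTb x y hx) : TTb x y hx :=
  if ha : a.1 = 0 then b else if hb : b.1 = 0 then a else
    ⟨min (a.1 + b.1) y, by
      rcases a.2 with h | h
      · exact absurd h ha
      rcases b.2 with h' | h'
      · exact absurd h' hb
      right
      exact ⟨le_min (by linarith [h.1, h'.1]) (by linarith [h.1, h.2]), min_le_right _ _⟩⟩

instance {x y : ℝ} {hx : 0 ≤ x} : Add (TTb x y hx) := ⟨TTb.add⟩
noncomputable instance {x y : ℝ} {hx : 0 ≤ x} : Mul (TTb x y hx) := ⟨TTb.mul⟩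

end TTb

/-- The truncated tropical semiring `𝕋_{[x,y]}` (for `0 ≤ x < y`): the real interval
`[x,y]` together with a multiplicative identity `0` and a zero `-∞`, with addition
`max` and multiplication the `y`-truncated addition `a ⊗ b = min (a+b) y`. -/
abbrev TT (x y : ℝ) (hx : 0 ≤ x) : Type := Adj0 (TTb x y hx)

/-- The multiplicative identity `0` of `𝕋_{[x,y]}`. -/
noncomputable def ttId (x y : ℝ) (hx : 0 ≤ x) : TT x y hx := Adj0.elem ⟨0, Or.inl rfl⟩

lemma ttId_mul {x y : ℝ} {hx : 0 ≤ x} (b : TT x y hx) : ttId x y hx * b = b := by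
  cases b with
  | zero => rfl
  | elem e =>
    show Adj0.elem (TTb.mul ⟨0, Or.inl rfl⟩ e) = Adj0.elem e
    first | (unfold TTb.mul; rw [dif_pos rfl]) | simp [TTb.mul]

/-- The subsemigroup `S` of `M_2(𝕋_{[1,z]})` of matrices of the form `[[0,a],[-∞,b]]`. -/
noncomputable def UpperS (z : ℝ) (hz : (0:ℝ) ≤ 1) : Type :=
  {A : MatSR (TT 1 z hz) 2 // A 0 0 = ttId 1 z hz ∧ A 1 0 = Adj0.zero}

/-- The subsemigroup `S'` of `M_2(𝕋_{[1,z]})` of matrices of the form `[[0,-∞],[a,b]]`. -/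
noncomputable def LowerS (z : ℝ) (hz : (0:ℝ) ≤ 1) : Type :=
  {A : MatSR (TT 1 z hz) 2 // A 0 0 = ttId 1 z hz ∧ A 0 1 = Adj0.zero}

noncomputable instance {z : ℝ} {hz : (0:ℝ) ≤ 1} : Mul (UpperS z hz) :=
  ⟨fun A B => ⟨A.1 * B.1, by
    obtain ⟨hA1, hA2⟩ := A.2
    obtain ⟨hB1, hB2⟩ := B.2
    constructor
    · show A.1 0 0 * B.1 0 0 + A.1 0 1 * B.1 1 0 = ttId 1 z hz
      rw [hA1, hB1, hB2, ttId_mul, Adj0.mul_zero, Adj0.add_zero]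
    · show A.1 1 0 * B.1 0 0 + A.1 1 1 * B.1 1 0 = Adj0.zero
      rw [hA2, hB2, Adj0.zero_mul, Adj0.mul_zero, Adj0.add_zero]⟩⟩

noncomputable instance {z : ℝ} {hz : (0:ℝ) ≤ 1} : Mul (LowerS z hz) :=
  ⟨fun A B => ⟨A.1 * B.1, by
    obtain ⟨hA1, hA2⟩ := A.2
    obtain ⟨hB1, hB2⟩ := B.2
    constructor
    · show A.1 0 0 * B.1 0 0 + A.1 0 1 * B.1 1 0 = ttId 1 z hz
      rw [hA1, hB1, hA2, ttId_mul, Adj0.zero_mul, Adj0.add_zero]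
    · show A.1 0 0 * B.1 0 1 + A.1 0 1 * B.1 1 1 = Adj0.zero
      rw [hA1, hB2, hA2, ttId_mul, Adj0.zero_mul, Adj0.add_zero]⟩⟩

/-!
An isomorphism fixes `-∞` and `0`, the additive and multiplicative identities, and since it
preserves `max` it acts on the real values as an increasing bijection `G` that turns truncated
addition into truncated addition. Dividing by `x` normalises `𝕋_{[x,y]}` to `𝕋_{[1,t]}`,
`t = y / x`. For `t ≤ 2` every product is truncated, so any increasing affine bijection
`[1,t] → [1,2]` is an isomorphism; for `2 < t < 3` only products of two factors below `t - 1`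
escape truncation, and a three-piece linear map onto `[1,5/2]` works.

Conversely, for `t ≥ 3` the map `G` is additive on `[1,t)`, so `u ↦ G (1 + u) - 1` satisfies
Cauchy's equation on `[0,1)` and, being monotone, is linear; injectivity and surjectivity force
slope `1`, so `G` is the identity on `[1,t)` and `t` is an invariant. The small cases are told
apart by simpler invariants: every element of `𝕋_{[0,1]}` is a square but `1` is not one in
`𝕋_{[1,w]}` for `w ≥ 2`; in `𝕋_{[1,2]}` the square of the least element is the top; in
`𝕋_{[1,5/2]}` the product `1 ⊗ 3/2` is the top although `3/2 < 1 ⊗ 1`, which is impossible in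
`𝕋_{[1,w]}` for `w ≥ 3`.
-/

open Set Function

theorem RingLikeIso.trans {R S T : Type*} [Add R] [Mul R] [Add S] [Mul S] [Add T] [Mul T]
    (h₁ : RingLikeIso R S) (h₂ : RingLikeIso S T) : RingLikeIso R T := by
  obtain ⟨f, hf, hf_add, hf_mul⟩ := h₁
  obtain ⟨g, hg, hg_add, hg_mul⟩ := h₂
  exact ⟨g ∘ f, hg.comp hf, fun a b => by simp [hf_add, hg_add],
    fun a b => by simp [hf_mul, hg_mul]⟩

def Adj0.map {S T : Type*} (g : S → T) : Adj0 S → Adj0 T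
  | .zero => .zero
  | .elem s => .elem (g s)

theorem Adj0.eq_zero_of_forall_add_eq {S : Type*} [Add S] {e : Adj0 S}
    (he : ∀ b, e + b = b) : e = Adj0.zero := by
  simpa using he Adj0.zero

theorem Adj0.ringLikeIso_iff {S T : Type*} [Add S] [Mul S] [Add T] [Mul T] :
    RingLikeIso (Adj0 S) (Adj0 T) ↔ RingLikeIso S T := by
  constructor
  · rintro ⟨f, ⟨hinj, hsurj⟩, hadd, hmul⟩
    have hzero : f .zero = .zero := Adj0.eq_zero_of_forall_add_eq fun b => by
      obtain ⟨a, rfl⟩ := hsurj b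
      rw [← hadd, Adj0.zero_add]
    have hf_elem : ∀ s, ∃ t, f (.elem s) = .elem t := fun s => by
      cases h : f (.elem s) with
      | zero => cases hinj (h.trans hzero.symm)
      | elem t => exact ⟨t, rfl⟩
    choose g hg using hf_elem
    refine ⟨g, ⟨fun s s' h => ?_, fun t => ?_⟩, fun s s' => ?_, fun s s' => ?_⟩
    · exact Adj0.elem.inj (hinj (by rw [hg, hg, h]))
    · obtain ⟨_ | s, hs⟩ := hsurj (.elem t)
      · cases hzero.symm.trans hs
      · exact ⟨s, Adj0.elem.inj ((hg s).symm.trans hs)⟩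
    · apply Adj0.elem.inj
      rw [← Adj0.elem_add_elem, ← hg, ← hg, ← hg, ← hadd, Adj0.elem_add_elem]
    · apply Adj0.elem.inj
      rw [← Adj0.elem_mul_elem, ← hg, ← hg, ← hg, ← hmul, Adj0.elem_mul_elem]
  · rintro ⟨g, ⟨hinj, hsurj⟩, hadd, hmul⟩
    refine ⟨Adj0.map g, ⟨?_, ?_⟩, ?_, ?_⟩
    · rintro (_ | s) (_ | s') h
      · rfl
      · cases h
      · cases h
      · exact congrArg _ (hinj (Adj0.elem.inj h))
    · rintro (_ | t)
      · exact ⟨.zero, rfl⟩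
      · obtain ⟨s, rfl⟩ := hsurj t
        exact ⟨.elem s, rfl⟩
    · rintro (_ | s) (_ | s') <;> simp [Adj0.map, hadd]
    · rintro (_ | s) (_ | s') <;> simp [Adj0.map, hmul]

def ttSet (x y : ℝ) : Set ℝ := insert 0 (Icc x y)

theorem zero_mem_ttSet (x y : ℝ) : (0 : ℝ) ∈ ttSet x y := mem_insert 0 _

theorem le_of_mem_ttSet {x y r : ℝ} (hx : 0 ≤ x) (hxy : x ≤ y) (hr : r ∈ ttSet x y) :
    r ≤ y := by
  rcases hr with rfl | hr
  exacts [hx.trans hxy, hr.2]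

def TTb.mk {x y : ℝ} {hx : 0 ≤ x} (r : ℝ) (hr : r ∈ ttSet x y) : TTb x y hx := ⟨r, hr⟩

@[simp] theorem TTb.val_mk {x y r : ℝ} {hx : 0 ≤ x} (hr : r ∈ ttSet x y) :
    (TTb.mk r hr : TTb x y hx).1 = r := rfl

noncomputable def truncMul (y a b : ℝ) : ℝ := if a = 0 then b else if b = 0 then a else min (a + b) y

theorem TTb.val_mul {x y : ℝ} {hx : 0 ≤ x} (a b : TTb x y hx) :
    (a * b).1 = truncMul y a.1 b.1 := by
  show (TTb.mul a b).1 = _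
  unfold TTb.mul truncMul
  by_cases ha : a.1 = 0 <;> by_cases hb : b.1 = 0 <;> simp [ha, hb]

/-- The action on real values of an isomorphism `𝕋_{[x,y]} ≅ 𝕋_{[x',y']}`, which necessarily
fixes `-∞` (see `ringLikeIso_TT_iff`). -/
structure IsTTIsoMap (x y x' y' : ℝ) (G : ℝ → ℝ) : Prop where
  map_zero : G 0 = 0
  strictMonoOn : StrictMonoOn G (ttSet x y)
  mapsTo : MapsTo G (ttSet x y) (ttSet x' y')
  surjOn : SurjOn G (ttSet x y) (ttSet x' y')
  map_mul : ∀ a ∈ Icc x y, ∀ b ∈ Icc x y, a ≠ 0 → b ≠ 0 →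
    G (min (a + b) y) = min (G a + G b) y'

namespace IsTTIsoMap

variable {x y x' y' : ℝ} {G : ℝ → ℝ}

theorem map_max (hG : IsTTIsoMap x y x' y' G) {a b : ℝ} (ha : a ∈ ttSet x y)
    (hb : b ∈ ttSet x y) : G (max a b) = max (G a) (G b) := by
  rcases le_total a b with hab | hab
  · rw [max_eq_right hab, max_eq_right (hG.strictMonoOn.monotoneOn ha hb hab)]
  · rw [max_eq_left hab, max_eq_left (hG.strictMonoOn.monotoneOn hb ha hab)]

theorem ne_zero (hG : IsTTIsoMap x y x' y' G) {a : ℝ} (ha : a ∈ ttSet x y) (ha0 : a ≠ 0) :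
    G a ≠ 0 := fun h =>
  ha0 (hG.strictMonoOn.injOn ha (zero_mem_ttSet x y) (h.trans hG.map_zero.symm))

theorem map_truncMul (hG : IsTTIsoMap x y x' y' G) {a b : ℝ} (ha : a ∈ ttSet x y)
    (hb : b ∈ ttSet x y) : G (truncMul y a b) = truncMul y' (G a) (G b) := by
  by_cases ha0 : a = 0
  · simp [truncMul, ha0, hG.map_zero]
  by_cases hb0 : b = 0
  · simp [truncMul, hb0, ha0, hG.map_zero, hG.ne_zero ha ha0]
  simp only [truncMul, if_neg ha0, if_neg hb0, if_neg (hG.ne_zero ha ha0),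
    if_neg (hG.ne_zero hb hb0)]
  exact hG.map_mul a (ha.resolve_left ha0) b (hb.resolve_left hb0) ha0 hb0

theorem map_left (hG : IsTTIsoMap x y x' y' G) (hx : 0 < x) (hxy : x ≤ y) (hx' : 0 < x')
    (hxy' : x' ≤ y') : G x = x' := by
  have hxmem : x ∈ ttSet x y := mem_insert_of_mem 0 ⟨le_rfl, hxy⟩
  obtain ⟨r, hr, hGr⟩ := hG.surjOn (mem_insert_of_mem 0 ⟨le_rfl, hxy'⟩ : x' ∈ ttSet x' y')
  have hr0 : r ≠ 0 := by rintro rfl; exact hx'.ne (hG.map_zero ▸ hGr)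
  have hle : G x ≤ x' := hGr ▸ hG.strictMonoOn.monotoneOn hxmem hr ((hr.resolve_left hr0).1)
  have hge : x' ≤ G x := ((hG.mapsTo hxmem).resolve_left (hG.ne_zero hxmem hx.ne')).1
  exact le_antisymm hle hge

theorem map_right (hG : IsTTIsoMap x y x' y' G) (hx : 0 ≤ x) (hxy : x ≤ y) (hx' : 0 ≤ x')
    (hxy' : x' ≤ y') : G y = y' := by
  have hymem : y ∈ ttSet x y := mem_insert_of_mem 0 ⟨hxy, le_rfl⟩
  obtain ⟨r, hr, hGr⟩ := hG.surjOn (mem_insert_of_mem 0 ⟨hxy', le_rfl⟩ : y' ∈ ttSet x' y')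
  have hge : y' ≤ G y := hGr ▸ hG.strictMonoOn.monotoneOn hr hymem (le_of_mem_ttSet hx hxy hr)
  exact le_antisymm (le_of_mem_ttSet hx' hxy' (hG.mapsTo hymem)) hge

theorem map_add (hG : IsTTIsoMap x y x' y' G) (hx : 0 < x) (hx' : 0 ≤ x') (hxy' : x' ≤ y')
    {a b : ℝ} (ha : x ≤ a) (hb : x ≤ b) (hab : a + b < y) : G (a + b) = G a + G b := by
  have hxy : x ≤ y := by linarith
  have hlt : G (a + b) < y' := by
    rw [← hG.map_right hx.le hxy hx' hxy']
    exact hG.strictMonoOn (mem_insert_of_mem 0 ⟨by linarith, hab.le⟩)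
      (mem_insert_of_mem 0 ⟨hxy, le_rfl⟩) hab
  have hmul := hG.map_mul a ⟨ha, by linarith⟩ b ⟨hb, by linarith⟩ (by linarith) (by linarith)
  rw [min_eq_left hab.le] at hmul
  rw [hmul] at hlt ⊢
  exact min_eq_left ((min_lt_iff.1 hlt).resolve_right (lt_irrefl _)).le

end IsTTIsoMap

theorem TTb.mk_zero_mul {x y : ℝ} {hx : 0 ≤ x} (b : TTb x y hx) :
    TTb.mk 0 (zero_mem_ttSet x y) * b = b :=
  Subtype.ext (by simp [TTb.val_mul, truncMul])

theorem TTb.val_eq_zero_of_forall_mul_eq {x y : ℝ} {hx : 0 ≤ x} {e : TTb x y hx}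
    (he : ∀ b, e * b = b) : e.1 = 0 := by
  have := congrArg Subtype.val (he (TTb.mk 0 (zero_mem_ttSet x y)))
  rw [TTb.val_mul] at this
  simpa [truncMul] using this

theorem TTb.exists_isTTIsoMap {x y x' y' : ℝ} {hx : 0 ≤ x} {hx' : 0 ≤ x'}
    (h : RingLikeIso (TTb x y hx) (TTb x' y' hx')) : ∃ G, IsTTIsoMap x y x' y' G := by
  obtain ⟨g, ⟨hinj, hsurj⟩, hadd, hmul⟩ := h
  classical
  let G : ℝ → ℝ := fun r => if h : r ∈ ttSet x y then (g ⟨r, h⟩).1 else 0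
  have hG : ∀ a : TTb x y hx, G a.1 = (g a).1 := fun a => dif_pos a.2
  have hG0 : G 0 = 0 := by
    rw [← TTb.val_mk (hx := hx) (zero_mem_ttSet x y), hG]
    refine TTb.val_eq_zero_of_forall_mul_eq fun b => ?_
    obtain ⟨a, rfl⟩ := hsurj b
    rw [← hmul, TTb.mk_zero_mul]
  have hmono : StrictMonoOn G (ttSet x y) := by
    intro a ha b hb hab
    have hsum : TTb.mk a ha + TTb.mk b hb = (TTb.mk b hb : TTb x y hx) :=
      Subtype.ext (max_eq_right hab.le)
    have hle : (g (TTb.mk a ha)).1 ≤ (g (TTb.mk b hb)).1 := by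
      rw [← hsum, hadd]
      exact le_max_left _ _
    have hne : (g (TTb.mk a ha)).1 ≠ (g (TTb.mk b hb)).1 := fun h =>
      hab.ne (congrArg Subtype.val (hinj (Subtype.ext h)))
    rw [← TTb.val_mk (hx := hx) ha, hG, ← TTb.val_mk (hx := hx) hb, hG]
    exact lt_of_le_of_ne hle hne
  refine ⟨G, hG0, hmono, fun r hr => ?_, fun s hs => ?_, fun a ha b hb ha0 hb0 => ?_⟩
  · rw [← TTb.val_mk (hx := hx) hr, hG]
    exact (g _).2
  · obtain ⟨a, ha⟩ := hsurj ⟨s, hs⟩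
    exact ⟨a.1, a.2, (hG a).trans (congrArg Subtype.val ha)⟩
  · have hGne : ∀ r ∈ ttSet x y, r ≠ 0 → G r ≠ 0 := fun r hr hr0 h =>
      hr0 (hmono.injOn hr (zero_mem_ttSet x y) (h.trans hG0.symm))
    have ha' : a ∈ ttSet x y := mem_insert_of_mem 0 ha
    have hb' : b ∈ ttSet x y := mem_insert_of_mem 0 hb
    have := congrArg Subtype.val (hmul (TTb.mk a ha') (TTb.mk b hb'))
    rw [TTb.val_mul, ← hG, ← hG, ← hG, TTb.val_mul] at this
    simpa [truncMul, ha0, hb0, hGne a ha' ha0, hGne b hb' hb0] using this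

theorem IsTTIsoMap.ringLikeIso_TTb {x y x' y' : ℝ} {hx : 0 ≤ x} {hx' : 0 ≤ x'} {G : ℝ → ℝ}
    (hG : IsTTIsoMap x y x' y' G) : RingLikeIso (TTb x y hx) (TTb x' y' hx') := by
  let g : TTb x y hx → TTb x' y' hx' := fun a => ⟨G a.1, hG.mapsTo a.2⟩
  refine ⟨g, ⟨fun a b h => Subtype.ext (hG.strictMonoOn.injOn a.2 b.2
    (congrArg Subtype.val h)), fun b => ?_⟩, fun a b => Subtype.ext (hG.map_max a.2 b.2),
    fun a b => Subtype.ext ?_⟩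
  · obtain ⟨r, hr, hGr⟩ := hG.surjOn b.2
    exact ⟨⟨r, hr⟩, Subtype.ext hGr⟩
  · show G (a * b).1 = (g a * g b).1
    rw [TTb.val_mul, TTb.val_mul]
    exact hG.map_truncMul a.2 b.2

theorem ringLikeIso_TT_iff {x y x' y' : ℝ} {hx : 0 ≤ x} {hx' : 0 ≤ x'} :
    RingLikeIso (TT x y hx) (TT x' y' hx') ↔ ∃ G, IsTTIsoMap x y x' y' G :=
  Adj0.ringLikeIso_iff.trans ⟨TTb.exists_isTTIsoMap, fun ⟨_, hG⟩ => hG.ringLikeIso_TTb⟩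

theorem isTTIsoMap_div {x y c : ℝ} (hc : 0 < c) :
    IsTTIsoMap x y (x / c) (y / c) (· / c) where
  map_zero := zero_div c
  strictMonoOn := fun _ _ _ _ h => div_lt_div_of_pos_right h hc
  mapsTo := by
    rintro r (rfl | ⟨h₁, h₂⟩)
    · simpa using zero_mem_ttSet (x / c) (y / c)
    · exact mem_insert_of_mem 0 ⟨div_le_div_of_nonneg_right h₁ hc.le,
        div_le_div_of_nonneg_right h₂ hc.le⟩
  surjOn := by
    rintro s (rfl | ⟨h₁, h₂⟩)
    · exact ⟨0, zero_mem_ttSet x y, zero_div c⟩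
    · refine ⟨s * c, mem_insert_of_mem 0 ⟨?_, ?_⟩, mul_div_cancel_right₀ s hc.ne'⟩
      · rwa [div_le_iff₀ hc] at h₁
      · rwa [le_div_iff₀ hc] at h₂
  map_mul := fun a _ b _ _ _ => by
    show min (a + b) y / c = min (a / c + b / c) (y / c)
    rw [← add_div, min_div_div_right hc.le]

theorem ringLikeIso_zero_left {y : ℝ} {hx : (0 : ℝ) ≤ 0} (hy : 0 < y) :
    RingLikeIso (TT 0 y hx) (TT 0 1 le_rfl) := by
  have := isTTIsoMap_div (x := 0) (y := y) hy
  rw [zero_div, div_self hy.ne'] at this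
  exact ringLikeIso_TT_iff.2 ⟨_, this⟩

theorem ringLikeIso_div_left {x y : ℝ} {hx : 0 ≤ x} (hx0 : 0 < x) :
    RingLikeIso (TT x y hx) (TT 1 (y / x) zero_le_one) := by
  have := isTTIsoMap_div (x := x) (y := y) hx0
  rw [div_self hx0.ne'] at this
  exact ringLikeIso_TT_iff.2 ⟨_, this⟩

theorem isTTIsoMap_update {x y x' y' : ℝ} {F : ℝ → ℝ} (hx : 0 < x) (hx' : 0 < x')
    (hmono : StrictMonoOn F (Icc x y)) (hmaps : MapsTo F (Icc x y) (Icc x' y'))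
    (hsurj : SurjOn F (Icc x y) (Icc x' y'))
    (hmul : ∀ a ∈ Icc x y, ∀ b ∈ Icc x y, F (min (a + b) y) = min (F a + F b) y') :
    IsTTIsoMap x y x' y' (update F 0 0) := by
  have hF : ∀ r ∈ Icc x y, update F 0 0 r = F r := fun r hr =>
    update_of_ne (hx.trans_le hr.1).ne' _ _
  refine ⟨update_self 0 0 F, ?_, ?_, ?_, fun a ha b hb _ _ => ?_⟩
  · rintro a (rfl | ha) b (rfl | hb) hab
    · exact absurd hab (lt_irrefl _)
    · rw [update_self, hF b hb]
      exact hx'.trans_le (hmaps hb).1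
    · exact absurd hab (hx.trans_le ha.1).not_gt
    · rw [hF a ha, hF b hb]
      exact hmono ha hb hab
  · rintro r (rfl | hr)
    · rw [update_self]
      exact zero_mem_ttSet _ _
    · rw [hF r hr]
      exact mem_insert_of_mem 0 (hmaps hr)
  · rintro s (rfl | hs)
    · exact ⟨0, zero_mem_ttSet _ _, update_self 0 0 F⟩
    · obtain ⟨r, hr, rfl⟩ := hsurj hs
      exact ⟨r, mem_insert_of_mem 0 hr, hF r hr⟩
  · have hab : min (a + b) y ∈ Icc x y :=
      ⟨le_min (by linarith [hb.1, ha.1]) (ha.1.trans ha.2), min_le_right _ _⟩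
    rw [hF _ hab, hF a ha, hF b hb]
    exact hmul a ha b hb

theorem ringLikeIso_one_two {t : ℝ} (h1 : 1 < t) (h2 : t ≤ 2) :
    RingLikeIso (TT 1 t zero_le_one) (TT 1 2 zero_le_one) := by
  have hd : 0 < t - 1 := by linarith
  have hF : ∀ s ∈ Icc 1 t, 0 ≤ (s - 1) / (t - 1) ∧ (s - 1) / (t - 1) ≤ 1 := fun s hs =>
    ⟨div_nonneg (by linarith [hs.1]) hd.le, (div_le_one hd).2 (by linarith [hs.2])⟩
  refine ringLikeIso_TT_iff.2 ⟨_, isTTIsoMap_update (F := fun s => 1 + (s - 1) / (t - 1))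
    one_pos one_pos ?_ ?_ ?_ ?_⟩
  · intro a _ b _ hab
    have := div_lt_div_of_pos_right (sub_lt_sub_right hab 1) hd
    simpa using this
  · intro s hs
    constructor <;> linarith [hF s hs]
  · intro s hs
    refine ⟨1 + (s - 1) * (t - 1), ⟨by nlinarith [hs.1], by nlinarith [hs.2]⟩, ?_⟩
    field_simp
    ring
  · -- every product is truncated
    intro a ha b hb
    rw [min_eq_right (by linarith [ha.1, hb.1]), min_eq_right (by linarith [hF a ha, hF b hb]),
      div_self hd.ne']
    norm_num

/-- Piecewise linear, sending `1, t - 1, 2, t` to `1, 3/2, 2, 5/2`. -/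
noncomputable def fiveHalvesMap (t s : ℝ) : ℝ :=
  if s ≤ t - 1 then 1 + (s - 1) * (2 * (t - 2))⁻¹
  else if s ≤ 2 then 3 / 2 + (s - (t - 1)) * (2 * (3 - t))⁻¹
  else 2 + (s - 2) * (2 * (t - 2))⁻¹

section fiveHalvesMap

variable {t : ℝ}

theorem fiveHalvesMap_slopes (h2 : 2 < t) (h3 : t < 3) :
    0 < (2 * (t - 2))⁻¹ ∧ 0 < (2 * (3 - t))⁻¹ ∧
      (2 * (t - 2))⁻¹ * (t - 2) = 1 / 2 ∧ (2 * (3 - t))⁻¹ * (3 - t) = 1 / 2 := by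
  have hd : 0 < t - 2 := by linarith
  have he : 0 < 3 - t := by linarith
  refine ⟨by positivity, by positivity, ?_, ?_⟩ <;> field_simp

theorem fiveHalvesMap_mapsTo (h2 : 2 < t) (h3 : t < 3) :
    MapsTo (fiveHalvesMap t) (Icc 1 t) (Icc 1 (5 / 2)) := by
  obtain ⟨hk, hm, hk2, hm2⟩ := fiveHalvesMap_slopes h2 h3
  rintro s ⟨hs1, hs2⟩
  rw [fiveHalvesMap]
  split_ifs <;> constructor <;> nlinarith

theorem fiveHalvesMap_strictMonoOn (h2 : 2 < t) (h3 : t < 3) :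
    StrictMonoOn (fiveHalvesMap t) (Icc 1 t) := by
  obtain ⟨hk, hm, hk2, hm2⟩ := fiveHalvesMap_slopes h2 h3
  rintro u ⟨hu, -⟩ v ⟨-, hv⟩ huv
  rw [fiveHalvesMap, fiveHalvesMap]
  split_ifs <;> nlinarith

theorem fiveHalvesMap_surjOn (h2 : 2 < t) (h3 : t < 3) :
    SurjOn (fiveHalvesMap t) (Icc 1 t) (Icc 1 (5 / 2)) := by
  have hd : 0 < t - 2 := by linarith
  have he : 0 < 3 - t := by linarith
  rintro s ⟨hs1, hs2⟩
  rcases le_or_gt s (3 / 2) with hA | hA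
  · refine ⟨1 + (s - 1) * (2 * (t - 2)), ⟨by nlinarith, by nlinarith⟩, ?_⟩
    rw [fiveHalvesMap, if_pos (by nlinarith)]
    field_simp
    ring
  rcases le_or_gt s 2 with hB | hB
  · refine ⟨(t - 1) + (s - 3 / 2) * (2 * (3 - t)), ⟨by nlinarith, by nlinarith⟩, ?_⟩
    rw [fiveHalvesMap, if_neg (by nlinarith), if_pos (by nlinarith)]
    field_simp
    ring
  · refine ⟨2 + (s - 2) * (2 * (t - 2)), ⟨by nlinarith, by nlinarith⟩, ?_⟩
    rw [fiveHalvesMap, if_neg (by nlinarith), if_neg (by nlinarith)]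
    field_simp
    ring

theorem fiveHalvesMap_map_mul (h2 : 2 < t) (h3 : t < 3) {u v : ℝ} (hu : u ∈ Icc 1 t)
    (hv : v ∈ Icc 1 t) :
    fiveHalvesMap t (min (u + v) t) = min (fiveHalvesMap t u + fiveHalvesMap t v) (5 / 2) := by
  obtain ⟨hk, hm, hk2, hm2⟩ := fiveHalvesMap_slopes h2 h3
  obtain ⟨hu1, hu2⟩ := hu
  obtain ⟨hv1, hv2⟩ := hv
  rcases lt_or_ge (u + v) t with hlt | hge
  · rw [min_eq_left hlt.le, fiveHalvesMap, fiveHalvesMap, fiveHalvesMap,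
      if_pos (show u ≤ t - 1 by linarith), if_pos (show v ≤ t - 1 by linarith),
      if_neg (show ¬ u + v ≤ t - 1 by linarith)]
    split_ifs <;> rw [min_eq_left (by nlinarith)] <;> nlinarith
  · rw [min_eq_right hge, fiveHalvesMap, if_neg (by linarith), if_neg (by linarith),
      min_eq_right]
    · nlinarith
    rw [fiveHalvesMap, fiveHalvesMap]
    split_ifs <;> nlinarith

end fiveHalvesMap

theorem ringLikeIso_one_fiveHalves {t : ℝ} (h2 : 2 < t) (h3 : t < 3) :
    RingLikeIso (TT 1 t zero_le_one) (TT 1 2.5 zero_le_one) := by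
  rw [show (2.5 : ℝ) = 5 / 2 by norm_num]
  exact ringLikeIso_TT_iff.2 ⟨_, isTTIsoMap_update one_pos one_pos
    (fiveHalvesMap_strictMonoOn h2 h3) (fiveHalvesMap_mapsTo h2 h3)
    (fiveHalvesMap_surjOn h2 h3) fun _ hu _ hv => fiveHalvesMap_map_mul h2 h3 hu hv⟩

theorem not_ringLikeIso_zero_left {y x' y' : ℝ} {hx : (0 : ℝ) ≤ 0} {hx' : 0 ≤ x'}
    (hx'0 : 0 < x') (h2 : 2 * x' ≤ y') : ¬ RingLikeIso (TT 0 y hx) (TT x' y' hx') := by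
  intro h
  obtain ⟨G, hG⟩ := ringLikeIso_TT_iff.1 h
  obtain ⟨r, hr, hGr⟩ :=
    hG.surjOn (mem_insert_of_mem 0 ⟨le_rfl, by linarith⟩ : x' ∈ ttSet x' y')
  have hr0 : r ≠ 0 := by
    rintro rfl
    exact hx'0.ne (hG.map_zero ▸ hGr)
  obtain ⟨hr1, hr2⟩ : r ∈ Icc 0 y := hr.resolve_left hr0
  -- `r` is the square of `r / 2`, whereas `x'` is not a square
  have hhalf : r / 2 ∈ Icc 0 y := ⟨by linarith, by linarith⟩
  have hhalf0 : r / 2 ≠ 0 := by positivity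
  have hGhalf : x' ≤ G (r / 2) :=
    ((hG.mapsTo (mem_insert_of_mem 0 hhalf)).resolve_left
      (hG.ne_zero (mem_insert_of_mem 0 hhalf) hhalf0)).1
  have hsq := hG.map_mul _ hhalf _ hhalf hhalf0 hhalf0
  rw [add_halves, min_eq_left hr2, hGr] at hsq
  have : 2 * x' ≤ min (G (r / 2) + G (r / 2)) y' := le_min (by linarith) h2
  linarith

theorem not_ringLikeIso_one_two {w : ℝ} (hw : 2 < w) :
    ¬ RingLikeIso (TT 1 2 zero_le_one) (TT 1 w zero_le_one) := by
  intro h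
  obtain ⟨G, hG⟩ := ringLikeIso_TT_iff.1 h
  have hG1 := hG.map_left one_pos one_le_two one_pos (by linarith)
  have hG2 := hG.map_right zero_le_one one_le_two zero_le_one (by linarith)
  have hsq := hG.map_mul 1 ⟨le_rfl, one_le_two⟩ 1 ⟨le_rfl, one_le_two⟩ one_ne_zero one_ne_zero
  rw [hG1, one_add_one_eq_two, min_self, hG2, min_eq_left hw.le] at hsq
  linarith

theorem not_ringLikeIso_one_fiveHalves {w : ℝ} (hw : 3 ≤ w) :
    ¬ RingLikeIso (TT 1 2.5 zero_le_one) (TT 1 w zero_le_one) := by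
  intro h
  obtain ⟨G, hG⟩ := ringLikeIso_TT_iff.1 h
  have hG1 := hG.map_left one_pos (by norm_num) one_pos (by linarith)
  have hGtop := hG.map_right zero_le_one (by norm_num) zero_le_one (by linarith)
  have hG2 := hG.map_mul 1 ⟨le_rfl, by norm_num⟩ 1 ⟨le_rfl, by norm_num⟩ one_ne_zero one_ne_zero
  rw [hG1, min_eq_left (by norm_num), min_eq_left (by linarith)] at hG2
  have hprod := hG.map_mul 1 ⟨le_rfl, by norm_num⟩ 1.5 ⟨by norm_num, by norm_num⟩ one_ne_zero
    (by norm_num)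
  rw [hG1, min_eq_right (by norm_num), hGtop] at hprod
  have hlt := hG.strictMonoOn
    (mem_insert_of_mem 0 ⟨by norm_num, by norm_num⟩ : (1.5 : ℝ) ∈ ttSet 1 2.5)
    (mem_insert_of_mem 0 ⟨by norm_num, by norm_num⟩ : (2 : ℝ) ∈ ttSet 1 2.5) (by norm_num)
  have : w ≤ 1 + G 1.5 := hprod ▸ min_le_left _ _
  norm_num at hG2
  linarith

def IsAddOnUnitInterval (h : ℝ → ℝ) : Prop :=
  ∀ u v, 0 ≤ u → 0 ≤ v → u + v < 1 → h (u + v) = h u + h v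

namespace IsAddOnUnitInterval

variable {h : ℝ → ℝ}

theorem map_natCast_mul (hadd : IsAddOnUnitInterval h) (n : ℕ) {u : ℝ} (hu : 0 ≤ u)
    (hnu : n * u < 1) : h (n * u) = n * h u := by
  induction n with
  | zero =>
    have := hadd 0 0 le_rfl le_rfl (by norm_num)
    simp only [add_zero] at this
    simp only [Nat.cast_zero, zero_mul]
    linarith
  | succ n ih =>
    push_cast at hnu ⊢
    rw [add_mul, one_mul] at hnu ⊢
    rw [hadd _ _ (by positivity) hu hnu, ih (by linarith)]
    ring

theorem map_div (hadd : IsAddOnUnitInterval h) {k m : ℕ} (hm : 0 < m)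
    (hkm : (k : ℝ) / m < 1) : h (k / m) = 2 * h (1 / 2) * (k / m) := by
  have hm' : (0 : ℝ) < m := by exact_mod_cast hm
  have hw : (0 : ℝ) ≤ 1 / (2 * m) := by positivity
  have hk : h (k / m) = (2 * k : ℕ) * h (1 / (2 * m)) := by
    have e : ((2 * k : ℕ) : ℝ) * (1 / (2 * m)) = k / m := by
      push_cast
      field_simp
    rw [← e, hadd.map_natCast_mul _ hw (e ▸ hkm)]
  have hhalf : h (1 / 2) = m * h (1 / (2 * m)) := by
    have e : (m : ℝ) * (1 / (2 * m)) = 1 / 2 := by field_simp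
    rw [← e, hadd.map_natCast_mul _ hw (by rw [e]; norm_num)]
  rw [hk, hhalf]
  push_cast
  field_simp

theorem eq_mul_of_monotoneOn (hadd : IsAddOnUnitInterval h) (hmono : MonotoneOn h (Ico 0 1))
    {u : ℝ} (hu : u ∈ Ico (0 : ℝ) 1) : h u = 2 * h (1 / 2) * u := by
  set c := 2 * h (1 / 2)
  have hrat : ∀ q : ℚ, 0 ≤ q → (q : ℝ) < 1 → h q = c * q := by
    intro q hq0 hq1
    have hq : (q : ℝ) = (q.num.toNat : ℕ) / (q.den : ℕ) := by
      rw [Rat.cast_def]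
      congr
      exact_mod_cast (Int.toNat_of_nonneg (Rat.num_nonneg.2 hq0)).symm
    rw [hq] at hq1 ⊢
    exact hadd.map_div q.den_pos hq1
  have h0 : h 0 = 0 := by simpa using hadd.map_natCast_mul 0 le_rfl (by norm_num)
  have hu0 : 0 ≤ h u := h0 ▸ hmono ⟨le_rfl, by norm_num⟩ hu hu.1
  have hc : 0 ≤ c := by
    have := hmono ⟨le_rfl, by norm_num⟩ ⟨by norm_num, by norm_num⟩ (by norm_num : (0 : ℝ) ≤ 1 / 2)
    simp only [c]
    linarith
  -- compare `h u` with `c * q` for rationals `q` close to `u` on either side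
  apply le_antisymm
  · by_contra! hlt
    obtain ⟨q, huq, hq⟩ := exists_rat_btwn
      (lt_min hu.2 (lt_add_of_pos_right u (div_pos (sub_pos.2 hlt) (by linarith : 0 < c + 1))))
    have hq1 := hq.trans_le (min_le_left _ _)
    have hqu := (lt_div_iff₀ (by linarith : 0 < c + 1)).1
      (sub_lt_iff_lt_add'.2 (hq.trans_le (min_le_right _ _)))
    have := hmono hu ⟨hu.1.trans huq.le, hq1⟩ huq.le
    rw [hrat q (by exact_mod_cast hu.1.trans huq.le) hq1] at this
    nlinarith
  · by_contra! hlt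
    have hu_pos : 0 < u := by
      by_contra! h'
      have : u = 0 := le_antisymm h' hu.1
      simp [this] at hlt
      linarith
    obtain ⟨q, hq, hqu⟩ := exists_rat_btwn
      (max_lt hu_pos (sub_lt_self u (div_pos (sub_pos.2 hlt) (by linarith : 0 < c + 1))))
    have hq0 : (0 : ℝ) ≤ q := (le_max_left _ _).trans hq.le
    have huq := (lt_div_iff₀ (by linarith : 0 < c + 1)).1
      (sub_lt_comm.1 ((le_max_right _ _).trans_lt hq))
    have := hmono ⟨hq0, hqu.trans hu.2⟩ hu hqu.le
    rw [hrat q (by exact_mod_cast hq0) (hqu.trans hu.2)] at this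
    nlinarith

end IsAddOnUnitInterval

namespace IsTTIsoMap

variable {y z : ℝ} {G : ℝ → ℝ}

theorem exists_map_one_add (hG : IsTTIsoMap 1 y 1 z G) (hy : 3 ≤ y) (hz : 1 ≤ z) :
    ∃ c, ∀ u ∈ Ico (0 : ℝ) 1, G (1 + u) = 1 + c * u := by
  have hG1 : G 1 = 1 := hG.map_left one_pos (by linarith) one_pos hz
  have hadd : IsAddOnUnitInterval (fun u => G (1 + u) - 1) := by
    intro u v hu hv huv
    have e1 := hG.map_add one_pos zero_le_one hz (a := 1 + u) (b := 1 + v) (by linarith)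
      (by linarith) (by linarith)
    have e2 := hG.map_add one_pos zero_le_one hz (a := 1 + (u + v)) (b := 1) (by linarith)
      le_rfl (by linarith)
    rw [show 1 + u + (1 + v) = 1 + (u + v) + 1 by ring] at e1
    linarith
  have hmem : ∀ u ∈ Ico (0 : ℝ) 1, 1 + u ∈ ttSet 1 y := fun u hu =>
    mem_insert_of_mem 0 ⟨by linarith [hu.1], by linarith [hu.2]⟩
  have hmono : MonotoneOn (fun u => G (1 + u) - 1) (Ico 0 1) := fun u hu v hv huv => by
    have := hG.strictMonoOn.monotoneOn (hmem u hu) (hmem v hv) (by linarith)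
    simp only
    linarith
  refine ⟨2 * (G (1 + 1 / 2) - 1), fun u hu => ?_⟩
  have := hadd.eq_mul_of_monotoneOn hmono hu
  linarith

theorem map_one_add (hG : IsTTIsoMap 1 y 1 z G) (hy : 3 ≤ y) (hz : 1 ≤ z) {u : ℝ}
    (hu : u ∈ Ico (0 : ℝ) 1) : G (1 + u) = 1 + u := by
  obtain ⟨c, hc⟩ := hG.exists_map_one_add hy hz
  have hmem : ∀ r, 1 ≤ r → r ≤ y → r ∈ ttSet 1 y := fun r h₁ h₂ => mem_insert_of_mem 0 ⟨h₁, h₂⟩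
  have hG2 : G 2 = 2 := by
    have := hG.map_add one_pos zero_le_one hz (a := 1) (b := 1) le_rfl le_rfl (by linarith)
    rw [hG.map_left one_pos (by linarith) one_pos hz] at this
    norm_num at this
    exact this
  suffices c = 1 by rw [hc u hu, this, one_mul]
  rcases lt_trichotomy c 1 with hlt | heq | hgt
  · -- then `(3 + c) / 2` is not a value of `G`
    have hc0 : 0 ≤ c := by
      have := hG.strictMonoOn.monotoneOn (hmem 1 le_rfl (by linarith))
        (hmem (1 + 1 / 2) (by norm_num) (by linarith)) (by norm_num)
      rw [hc (1 / 2) ⟨by norm_num, by norm_num⟩, hG.map_left one_pos (by linarith) one_pos hz]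
        at this
      linarith
    have hz2 : 2 ≤ z :=
      hG2 ▸ le_of_mem_ttSet zero_le_one hz (hG.mapsTo (hmem 2 one_le_two (by linarith)))
    obtain ⟨r, hr, hGr⟩ := hG.surjOn
      (mem_insert_of_mem 0 ⟨by linarith, by linarith⟩ : (3 + c) / 2 ∈ ttSet 1 z)
    rcases hr with rfl | ⟨hr1, hr2⟩
    · rw [hG.map_zero] at hGr
      linarith
    rcases lt_or_ge r 2 with hr | hr
    · have := hc (r - 1) ⟨by linarith, by linarith⟩
      rw [add_sub_cancel, hGr] at this
      nlinarith
    · have := hG.strictMonoOn.monotoneOn (hmem 2 one_le_two (by linarith)) (hmem r hr1 hr2) hr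
      linarith
  · exact heq
  · -- then `G (1 + 1 / c) = G 2`
    have hc0 : 0 < c := by linarith
    have := hc (1 / c) ⟨by positivity, (div_lt_one hc0).2 hgt⟩
    rw [mul_one_div_cancel hc0.ne', one_add_one_eq_two, ← hG2] at this
    have hlt : 1 + 1 / c < 2 := by linarith [(div_lt_one hc0).2 hgt]
    exact absurd this (hG.strictMonoOn (hmem _ (by linarith [one_div_pos.2 hc0]) (by linarith))
      (hmem 2 one_le_two (by linarith)) hlt).ne

theorem eqOn_Ico (hG : IsTTIsoMap 1 y 1 z G) (hy : 3 ≤ y) (hz : 1 ≤ z) :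
    EqOn G id (Ico 1 y) := by
  have hG1 : G 1 = 1 := hG.map_left one_pos (by linarith) one_pos hz
  have key : ∀ n : ℕ, ∀ r ∈ Ico 1 y, r < n + 2 → G r = r := by
    intro n
    induction n with
    | zero =>
      intro r hr hr2
      simpa using hG.map_one_add hy hz (u := r - 1) ⟨by linarith [hr.1], by
        norm_num at hr2; linarith⟩
    | succ n ih =>
      intro r hr hrn
      rcases lt_or_ge r 2 with hr2 | hr2
      · exact ih r hr (by linarith [n.cast_nonneg (α := ℝ)])
      · have := hG.map_add one_pos zero_le_one hz (a := r - 1) (b := 1) (by linarith) le_rfl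
          (by linarith [hr.2])
        push_cast at hrn
        rw [sub_add_cancel, hG1, ih (r - 1) ⟨by linarith, by linarith [hr.2]⟩ (by linarith)]
          at this
        linarith
  intro r hr
  obtain ⟨n, hn⟩ := exists_nat_gt r
  exact key n r hr (by linarith)

end IsTTIsoMap

theorem not_ringLikeIso_of_three_le_of_lt {y z : ℝ} (hy : 3 ≤ y) (hyz : y < z) :
    ¬ RingLikeIso (TT 1 y zero_le_one) (TT 1 z zero_le_one) := by
  intro h
  obtain ⟨G, hG⟩ := ringLikeIso_TT_iff.1 h
  have hz : 1 ≤ z := by linarith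
  obtain ⟨r, hr, hGr⟩ :=
    hG.surjOn (mem_insert_of_mem 0 ⟨by linarith, hyz.le⟩ : y ∈ ttSet 1 z)
  rcases hr with rfl | ⟨hr1, hr2⟩
  · rw [hG.map_zero] at hGr
    linarith
  rcases hr2.lt_or_eq with hr2 | rfl
  · rw [hG.eqOn_Ico hy hz ⟨hr1, hr2⟩] at hGr
    exact hr2.ne hGr
  · rw [hG.map_right zero_le_one (by linarith) zero_le_one hz] at hGr
    linarith

/-- classification of truncated tropical semirings up to isomorphism. -/
theorem stmt_14 :
    (∀ (x y : ℝ) (hx : 0 ≤ x), x < y →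
      (x = 0 → RingLikeIso (TT x y hx) (TT 0 1 le_rfl)) ∧
      (0 < x → y ≤ 2 * x → RingLikeIso (TT x y hx) (TT 1 2 zero_le_one)) ∧
      (0 < x → 2 * x < y → y < 3 * x →
        RingLikeIso (TT x y hx) (TT 1 2.5 zero_le_one)) ∧
      (0 < x → 3 * x ≤ y → RingLikeIso (TT x y hx) (TT 1 (y / x) zero_le_one))) ∧
    (¬ RingLikeIso (TT 0 1 le_rfl) (TT 1 2 zero_le_one)) ∧
    (¬ RingLikeIso (TT 0 1 le_rfl) (TT 1 2.5 zero_le_one)) ∧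
    (∀ y : ℝ, 3 ≤ y → ¬ RingLikeIso (TT 0 1 le_rfl) (TT 1 y zero_le_one)) ∧
    (¬ RingLikeIso (TT 1 2 zero_le_one) (TT 1 2.5 zero_le_one)) ∧
    (∀ y : ℝ, 3 ≤ y → ¬ RingLikeIso (TT 1 2 zero_le_one) (TT 1 y zero_le_one)) ∧
    (∀ y : ℝ, 3 ≤ y → ¬ RingLikeIso (TT 1 2.5 zero_le_one) (TT 1 y zero_le_one)) ∧
    (∀ y z : ℝ, 3 ≤ y → y < z →
      ¬ RingLikeIso (TT 1 y zero_le_one) (TT 1 z zero_le_one)) := by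
  refine ⟨fun x y hx hxy => ⟨?_, ?_, ?_, fun hx0 _ => ringLikeIso_div_left hx0⟩,
    ?_, ?_, fun y hy => ?_, ?_, fun y hy => ?_, fun y hy => ?_, fun y z hy hyz => ?_⟩
  · rintro rfl
    exact ringLikeIso_zero_left hxy
  · intro hx0 h2
    exact (ringLikeIso_div_left hx0).trans
      (ringLikeIso_one_two ((one_lt_div hx0).2 hxy) ((div_le_iff₀ hx0).2 h2))
  · intro hx0 h2 h3
    exact (ringLikeIso_div_left hx0).trans
      (ringLikeIso_one_fiveHalves ((lt_div_iff₀ hx0).2 h2) ((div_lt_iff₀ hx0).2 h3))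
  · exact not_ringLikeIso_zero_left one_pos (by norm_num)
  · exact not_ringLikeIso_zero_left one_pos (by norm_num)
  · exact not_ringLikeIso_zero_left one_pos (by linarith)
  · exact not_ringLikeIso_one_two (by norm_num)
  · exact not_ringLikeIso_one_two (by linarith)
  · exact not_ringLikeIso_one_fiveHalves hy
  · exact not_ringLikeIso_of_three_le_of_lt hy hyz
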